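/- Let k ≥ 0 and let f_k(t) = k t on [-1/2,1/2]. Then for every ε > 0, ω(ε, f_k, F_c) = 2 ε. -/

import Mathlib

/-!
Replacing `g` by `h = g - f_k`, which is again convex, it suffices to show `|h 0| ≤ 2ε` whenever
`‖h‖₂ ≤ ε`; the tent `h t = 2ε (3|t| - 1)` shows that this is sharp.
If `h 0 ≥ 0`, the Hermite–Hadamard inequality and Cauchy–Schwarz give `h 0 ≤ ∫ h ≤ ‖h‖₂ ≤ ε`.
If `h 0 < 0`, test `h` against `w t = 3|t| - 1`, for which `‖w‖₂ = 1/2`, `∫ w = -1/4` and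
`∫ |t| w = 0`. The even part `h t + h (-t)` lies below the line through its values at `0` and
`1/3` on `[0, 1/3]`, where `w ≤ 0`, and above it on `[1/3, 1/2]`, where `w ≥ 0`; replacing it by
that line gives `∫ h w ≥ -h 0 / 4`, while Cauchy–Schwarz gives `∫ h w ≤ ‖h‖₂ / 2`.
-/

open MeasureTheory

/-- The local modulus of continuity of `f` at `0` over the class of convex
functions on `[-1/2, 1/2]`. -/
noncomputable def omegaConvex (ε : ℝ) (f : ℝ → ℝ) : ℝ :=
  sSup {d : ℝ | ∃ g : ℝ → ℝ, ConvexOn ℝ (Set.Icc (-(1:ℝ)/2) (1/2)) g ∧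
    (∫ t in (-(1:ℝ)/2)..(1/2), (g t - f t)^2) ≤ ε^2 ∧ d = |g 0 - f 0|}

open Set intervalIntegral

section Integrals

variable {u : ℝ → ℝ} {a b r : ℝ}

theorem intervalIntegrable_of_continuousOn_Ioo_of_abs_le {C : ℝ} (hab : a ≤ b)
    (hc : ContinuousOn u (Ioo a b)) (hC : ∀ x ∈ Ioo a b, |u x| ≤ C) :
    IntervalIntegrable u volume a b := by
  rw [intervalIntegrable_iff_integrableOn_Ioo_of_le hab]
  refine ⟨hc.aestronglyMeasurable measurableSet_Ioo,
    .restrict_of_bounded (C := C) measure_Ioo_lt_top ?_⟩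
  exact (ae_restrict_iff' measurableSet_Ioo).mpr (ae_of_all _ (by simpa using hC))

theorem integral_quadratic (α β γ : ℝ) :
    ∫ t in a..b, (α + β * t + γ * t ^ 2) =
      α * (b - a) + β * (b ^ 2 - a ^ 2) / 2 + γ * (b ^ 3 - a ^ 3) / 3 := by
  have hβ : IntervalIntegrable (fun t => β * t) volume a b := by
    apply Continuous.intervalIntegrable; fun_prop
  have hγ : IntervalIntegrable (fun t => γ * t ^ 2) volume a b := by
    apply Continuous.intervalIntegrable; fun_prop
  rw [integral_add (intervalIntegrable_const.add hβ) hγ, integral_add intervalIntegrable_const hβ,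
    intervalIntegral.integral_const_mul, intervalIntegral.integral_const_mul, integral_id,
    integral_pow, intervalIntegral.integral_const, smul_eq_mul]
  ring

theorem IntervalIntegrable.comp_neg_of_symm (hu : IntervalIntegrable u volume (-r) r) :
    IntervalIntegrable (fun t => u (-t)) volume (-r) r := by
  simpa using ((IntervalIntegrable.iff_comp_neg).mp hu).symm

theorem integral_add_comp_neg (hu : IntervalIntegrable u volume (-r) r) :
    ∫ t in -r..r, (u t + u (-t)) = 2 * ∫ t in -r..r, u t := by
  have hneg : ∫ t in -r..r, u (-t) = ∫ t in -r..r, u t := by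
    rw [integral_comp_neg, neg_neg]
  rw [integral_add hu hu.comp_neg_of_symm, hneg, two_mul]

theorem integral_comp_abs_eq_two_mul {f : ℝ → ℝ} (hf : Continuous f) (hr : 0 ≤ r) :
    ∫ t in -r..r, f |t| = 2 * ∫ t in (0)..r, f t := by
  have hint : ∀ x y : ℝ, IntervalIntegrable (fun t => f |t|) volume x y :=
    (hf.comp continuous_abs).intervalIntegrable
  have hpos : ∫ t in (0)..r, f |t| = ∫ t in (0)..r, f t :=
    integral_congr fun t ht => by
      rw [uIcc_of_le hr] at ht
      rw [abs_of_nonneg ht.1]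
  have hneg : ∫ t in -r..0, f |t| = ∫ t in (0)..r, f |t| := by
    simpa only [abs_neg, neg_zero] using (integral_comp_neg (a := 0) (b := r) (fun t => f |t|)).symm
  rw [← integral_add_adjacent_intervals (hint _ _) (hint _ _), hneg, hpos, two_mul]

theorem integral_mul_le_of_integral_sq_le {v : ℝ → ℝ} {A B : ℝ} (hab : a ≤ b)
    (hA : 0 < A) (hB : 0 < B)
    (hu : IntervalIntegrable (fun t => u t ^ 2) volume a b)
    (hv : IntervalIntegrable (fun t => v t ^ 2) volume a b)
    (huv : IntervalIntegrable (fun t => u t * v t) volume a b)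
    (hu₂ : ∫ t in a..b, u t ^ 2 ≤ A ^ 2) (hv₂ : ∫ t in a..b, v t ^ 2 ≤ B ^ 2) :
    ∫ t in a..b, u t * v t ≤ A * B := by
  have hpt : ∀ t ∈ Icc a b, u t * v t ≤ B / A / 2 * u t ^ 2 + A / B / 2 * v t ^ 2 := by
    intro t _
    have hsq : B / A / 2 * u t ^ 2 + A / B / 2 * v t ^ 2 - u t * v t =
        (B * u t - A * v t) ^ 2 / (2 * A * B) := by
      field_simp
      ring
    linarith [show 0 ≤ (B * u t - A * v t) ^ 2 / (2 * A * B) by positivity]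
  have hmono := integral_mono_on hab huv
    ((hu.const_mul (B / A / 2)).add (hv.const_mul (A / B / 2))) hpt
  rw [integral_add (hu.const_mul _) (hv.const_mul _), intervalIntegral.integral_const_mul,
    intervalIntegral.integral_const_mul] at hmono
  have h₁ := mul_le_mul_of_nonneg_left hu₂ (by positivity : 0 ≤ B / A / 2)
  have h₂ := mul_le_mul_of_nonneg_left hv₂ (by positivity : 0 ≤ A / B / 2)
  have : B / A / 2 * A ^ 2 + A / B / 2 * B ^ 2 = A * B := by field_simp; ring
  linarith

end Integrals

section Convex

variable {f : ℝ → ℝ} {s : Set ℝ} {a b r : ℝ}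

theorem ConvexOn.slope_mul_sub_le (hf : ConvexOn ℝ s f) {x₀ x t : ℝ} (hx₀ : x₀ ∈ s) (hx : x ∈ s)
    (ht : t ∈ s) (hx₀x : x₀ < x) (hx₀t : x₀ ≤ t) :
    (f x - f x₀) / (x - x₀) * (t - x₀) * (t - x) ≤ (f t - f x₀) * (t - x) := by
  rcases hx₀t.eq_or_lt with rfl | hx₀t
  · simp
  have hslope : f t - f x₀ = (f t - f x₀) / (t - x₀) * (t - x₀) := by
    field_simp [(sub_pos.2 hx₀t).ne']
  rw [hslope]
  rcases le_total t x with htx | hxt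
  · have := hf.secant_mono hx₀ ht hx hx₀t.ne' hx₀x.ne' htx
    nlinarith [mul_nonneg (mul_nonneg_of_nonpos_of_nonpos (sub_nonpos.2 this) (sub_nonpos.2 htx))
      (sub_nonneg.2 hx₀t.le)]
  · have := hf.secant_mono hx₀ hx ht hx₀x.ne' hx₀t.ne' hxt
    nlinarith [mul_nonneg (mul_nonneg (sub_nonneg.2 this) (sub_nonneg.2 hxt))
      (sub_nonneg.2 hx₀t.le)]

theorem ConvexOn.map_add_div_two_le (hf : ConvexOn ℝ s f) {x y : ℝ} (hx : x ∈ s) (hy : y ∈ s) :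
    f ((x + y) / 2) ≤ (f x + f y) / 2 := by
  have := hf.2 hx hy (by norm_num : (0 : ℝ) ≤ 1 / 2) (by norm_num : (0 : ℝ) ≤ 1 / 2) (by norm_num)
  simp only [smul_eq_mul] at this
  calc f ((x + y) / 2) = f (1 / 2 * x + 1 / 2 * y) := by ring_nf
    _ ≤ 1 / 2 * f x + 1 / 2 * f y := this
    _ = (f x + f y) / 2 := by ring

theorem ConvexOn.comp_neg (hf : ConvexOn ℝ s f) : ConvexOn ℝ (-s) (fun t => f (-t)) := by
  refine ⟨hf.1.neg, fun x hx y hy a b ha hb hab => ?_⟩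
  simpa only [smul_neg, neg_add] using hf.2 hx hy ha hb hab

theorem ConvexOn.exists_abs_le (hf : ConvexOn ℝ (Icc a b) f) :
    ∃ C, ∀ x ∈ Icc a b, |f x| ≤ C := by
  set M := max (f a) (f b)
  refine ⟨|M| + |2 * f ((a + b) / 2) - M|, fun x hx => ?_⟩
  have hab : a ≤ b := hx.1.trans hx.2
  have hmax : ∀ y ∈ Icc a b, f y ≤ M := fun y hy =>
    hf.le_max_of_mem_Icc (left_mem_Icc.2 hab) (right_mem_Icc.2 hab) hy
  have hx' : a + b - x ∈ Icc a b := ⟨by linarith [hx.2], by linarith [hx.1]⟩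
  have hmid := hf.map_add_div_two_le hx hx'
  rw [show (x + (a + b - x)) / 2 = (a + b) / 2 by ring] at hmid
  have := hmax x hx
  have := hmax _ hx'
  rw [abs_le]
  constructor <;> linarith [le_abs_self M, neg_abs_le M, le_abs_self (2 * f ((a + b) / 2) - M),
    neg_abs_le (2 * f ((a + b) / 2) - M)]

theorem ConvexOn.intervalIntegrable (hf : ConvexOn ℝ (Icc a b) f) (hab : a ≤ b) :
    IntervalIntegrable f volume a b := by
  obtain ⟨C, hC⟩ := hf.exists_abs_le
  exact intervalIntegrable_of_continuousOn_Ioo_of_abs_le hab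
    (by simpa using hf.continuousOn_interior) fun x hx => hC x (Ioo_subset_Icc_self hx)

theorem ConvexOn.intervalIntegrable_sq (hf : ConvexOn ℝ (Icc a b) f) (hab : a ≤ b) :
    IntervalIntegrable (fun t => f t ^ 2) volume a b := by
  obtain ⟨C, hC⟩ := hf.exists_abs_le
  refine intervalIntegrable_of_continuousOn_Ioo_of_abs_le (C := C ^ 2) hab
    ((by simpa using hf.continuousOn_interior : ContinuousOn f (Ioo a b)).pow 2) fun x hx => ?_
  rw [abs_pow]
  exact pow_le_pow_left₀ (abs_nonneg _) (hC x (Ioo_subset_Icc_self hx)) 2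

theorem ConvexOn.two_mul_mul_le_integral (hf : ConvexOn ℝ (Icc (-r) r) f) (hr : 0 ≤ r) :
    2 * r * f 0 ≤ ∫ t in -r..r, f t := by
  have hint := hf.intervalIntegrable (by linarith)
  have hsum := integral_mono_on (by linarith) (intervalIntegrable_const (c := 2 * f 0))
    (hint.add hint.comp_neg_of_symm) fun t ht => by
      have := hf.map_add_div_two_le ht (x := t) (y := -t) ⟨by linarith [ht.2], by linarith [ht.1]⟩
      rw [add_neg_cancel, zero_div] at this
      linarith
  rw [integral_add_comp_neg hint, intervalIntegral.integral_const, smul_eq_mul] at hsum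
  linarith

theorem convexOn_tent (hs : Convex ℝ s) (k : ℝ) {c : ℝ} (hc : 0 ≤ c) :
    ConvexOn ℝ s (fun t => k * t + c * (3 * |t| - 1)) := by
  have habs : ConvexOn ℝ s (fun t : ℝ => ‖t‖) := convexOn_univ_norm.subset (subset_univ _) hs
  refine (((LinearMap.mulLeft ℝ k).convexOn hs).add
    ((habs.smul (by positivity : 0 ≤ 3 * c)).add_const (-c))).congr fun t _ => ?_
  simp only [Pi.add_apply, LinearMap.mulLeft_apply, Real.norm_eq_abs, smul_eq_mul]
  ring

end Convex

section Modulus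

variable {f : ℝ → ℝ}

theorem integral_three_mul_abs_sub_one_sq :
    ∫ t in -(1 / 2 : ℝ)..1 / 2, (3 * |t| - 1) ^ 2 = 1 / 4 := by
  rw [integral_comp_abs_eq_two_mul (f := fun x => (3 * x - 1) ^ 2) (by fun_prop) (by norm_num)]
  have : ∀ x : ℝ, (3 * x - 1) ^ 2 = 1 + (-6) * x + 9 * x ^ 2 := fun x => by ring
  simp only [this, integral_quadratic]
  norm_num

theorem ConvexOn.neg_div_four_le_integral_mul (hf : ConvexOn ℝ (Icc (-(1 / 2)) (1 / 2)) f) :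
    -(f 0 / 4) ≤ ∫ t in -(1 / 2 : ℝ)..1 / 2, f t * (3 * |t| - 1) := by
  set g := fun t => f t + f (-t)
  have hg : ConvexOn ℝ (Icc (-(1 / 2)) (1 / 2)) g := hf.add (by simpa using hf.comp_neg)
  set c := g (1 / 3) - 2 * f 0
  -- `g` is even, and its chord inequality through `0` and `1/3` flips exactly where the weight
  -- `3|t| - 1` changes sign
  have hpt : ∀ t ∈ Icc (-(1 / 2 : ℝ)) (1 / 2),
      (2 * f 0 + 3 * c * |t|) * (3 * |t| - 1) ≤ f t * (3 * |t| - 1) + f (-t) * (3 * |-t| - 1) := by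
    intro t ht
    have habs : |t| ∈ Icc (-(1 / 2 : ℝ)) (1 / 2) := ⟨by linarith [abs_nonneg t], abs_le.2 ht⟩
    have hchord := hg.slope_mul_sub_le (x₀ := 0) (x := 1 / 3) (by norm_num) (by norm_num) habs
      (by norm_num) (abs_nonneg t)
    have heven : g |t| = f t + f (-t) := by
      rcases abs_choice t with h | h <;> simp only [g, h, neg_neg, add_comm]
    simp only [g, neg_zero, heven, sub_zero] at hchord
    rw [abs_neg]
    nlinarith [hchord]
  have hint : IntervalIntegrable (fun t => f t * (3 * |t| - 1)) volume (-(1 / 2)) (1 / 2) :=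
    (hf.intervalIntegrable (by norm_num)).mul_continuousOn (by fun_prop)
  have hmono := integral_mono_on (by norm_num) (by apply Continuous.intervalIntegrable; fun_prop)
    (hint.add hint.comp_neg_of_symm) hpt
  rw [integral_add_comp_neg hint,
    integral_comp_abs_eq_two_mul (f := fun x => (2 * f 0 + 3 * c * x) * (3 * x - 1))
      (by fun_prop) (by norm_num)] at hmono
  have : ∀ x : ℝ, (2 * f 0 + 3 * c * x) * (3 * x - 1) =
      -(2 * f 0) + (6 * f 0 - 3 * c) * x + 9 * c * x ^ 2 := fun x => by ring
  simp only [this, integral_quadratic] at hmono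
  linarith

theorem ConvexOn.abs_le_two_mul_of_integral_sq_le (hf : ConvexOn ℝ (Icc (-(1 / 2)) (1 / 2)) f)
    {ε : ℝ} (hε : 0 < ε) (hf₂ : ∫ t in -(1 / 2 : ℝ)..1 / 2, f t ^ 2 ≤ ε ^ 2) :
    |f 0| ≤ 2 * ε := by
  have hsq := hf.intervalIntegrable_sq (by norm_num)
  have hmean : f 0 ≤ ε := by
    have hle := integral_mul_le_of_integral_sq_le (v := fun _ => 1) (B := 1) (by norm_num) hε
      one_pos hsq intervalIntegrable_const (by simpa using hf.intervalIntegrable (by norm_num))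
      hf₂ (by norm_num)
    have := hf.two_mul_mul_le_integral (by norm_num : (0 : ℝ) ≤ 1 / 2)
    simp only [mul_one] at hle
    linarith
  have hweighted : ∫ t in -(1 / 2 : ℝ)..1 / 2, f t * (3 * |t| - 1) ≤ ε * (1 / 2) :=
    integral_mul_le_of_integral_sq_le (by norm_num) hε (by norm_num) hsq
      (by apply Continuous.intervalIntegrable; fun_prop)
      ((hf.intervalIntegrable (by norm_num)).mul_continuousOn (by fun_prop)) hf₂
      (by rw [integral_three_mul_abs_sub_one_sq]; norm_num)
  have := hf.neg_div_four_le_integral_mul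
  rw [abs_le]
  constructor <;> linarith

end Modulus

theorem modulus_linear_convex_general (k ε : ℝ) (hε : 0 < ε) :
    omegaConvex ε (fun t => k * t) = 2 * ε := by
  unfold omegaConvex
  rw [neg_div]
  refine IsGreatest.csSup_eq ⟨⟨fun t => k * t + 2 * ε * (3 * |t| - 1), ?_, ?_, ?_⟩, ?_⟩
  · exact convexOn_tent (convex_Icc _ _) k (by positivity)
  · simp only [add_sub_cancel_left, mul_pow, intervalIntegral.integral_const_mul,
      integral_three_mul_abs_sub_one_sq]
    linarith
  · simp [abs_of_pos hε]
  · rintro d ⟨g, hg, hg₂, rfl⟩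
    have hh := hg.sub ((LinearMap.mulLeft ℝ k).concaveOn (convex_Icc _ _))
    simpa using hh.abs_le_two_mul_of_integral_sq_le hε hg₂

/-- Example 1 of Cai, Low and Xia (2013), convex class: for `f_k t = k t` with `k ≥ 0`, the
local modulus over the convex class equals `2ε` for every `ε > 0`. -/
theorem modulus_linear_convex (k ε : ℝ) (hk : 0 ≤ k) (hε : 0 < ε) :
    omegaConvex ε (fun t => k * t) = 2 * ε :=
  modulus_linear_convex_general k ε hε
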